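/- Let x ≥ 0. The indicator ‖x‖₀ (which is 0 if x = 0 and 1 otherwise) satisfies ‖x‖₀ = lim_{ς→0⁺} ln(1 + x/ς)/ln(1 + 1/ς) for all x ∈ [0, 1], and the convergence is monotone nonincreasing in ς for fixed x ∈ (0,1]. -/

import Mathlib

/-!
For `x ≠ 0` we have `log (1 + x/ς) = log (ς + x) - log ς` with `log (ς + x) → log x`
while `log ς → -∞`, so `log (1 + x/ς) / log ς → -1` and the quotient of two such terms tends to `1`.
For monotonicity put `t = 1/ς`: `t ↦ log (1 + x t) / log (1 + t)` has a nonnegative derivative exactly when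
`(1 + x t) log (1 + x t) / (x t) ≤ (1 + t) log (1 + t) / t`, which holds for `x ≤ 1` because the
secant slopes of the convex function `y ↦ y log y` at `y = 1` increase.
-/

open Filter Real

lemma one_add_mul_log_one_add_div_le {s t : ℝ} (hs : 0 < s) (hst : s ≤ t) :
    (1 + s) * log (1 + s) / s ≤ (1 + t) * log (1 + t) / t := by
  have h := convexOn_mul_log.secant_mono (a := 1) (x := 1 + s) (y := 1 + t)
    (by simp) (by simp; linarith) (by simp; linarith) (by linarith) (by linarith) (by linarith)
  simpa using h

lemma monotoneOn_log_one_add_mul_div_log_one_add {x : ℝ} (hx : 0 < x) (hx1 : x ≤ 1) :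
    MonotoneOn (fun t => log (1 + x * t) / log (1 + t)) (Set.Ioi 0) := by
  have hderiv : ∀ t ∈ Set.Ioi (0 : ℝ), HasDerivAt (fun t => log (1 + x * t) / log (1 + t))
      ((x / (1 + x * t) * log (1 + t) - log (1 + x * t) * (1 / (1 + t))) / log (1 + t) ^ 2) t := by
    intro t (ht : 0 < t)
    have hnum : HasDerivAt (fun t => log (1 + x * t)) (x / (1 + x * t)) t := by
      simpa [div_eq_inv_mul] using
        (((hasDerivAt_id t).const_mul x).const_add 1).log (by positivity)
    have hden : HasDerivAt (fun t => log (1 + t)) (1 / (1 + t)) t := by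
      simpa using ((hasDerivAt_id t).const_add 1).log (by positivity)
    exact hnum.div hden (log_pos (by linarith)).ne'
  refine monotoneOn_of_hasDerivWithinAt_nonneg (convex_Ioi 0)
    (fun t ht => (hderiv t ht).continuousAt.continuousWithinAt)
    (fun t ht => (hderiv t (interior_subset ht)).hasDerivWithinAt) ?_
  intro t ht
  rw [interior_Ioi, Set.mem_Ioi] at ht
  have hxt : 0 < x * t := mul_pos hx ht
  have hsecant := one_add_mul_log_one_add_div_le hxt (by nlinarith)
  rw [div_le_div_iff₀ hxt ht] at hsecant
  have hnum : log (1 + x * t) * (1 / (1 + t)) ≤ x / (1 + x * t) * log (1 + t) := by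
    rw [mul_one_div, div_mul_eq_mul_div, div_le_div_iff₀ (by positivity) (by positivity)]
    nlinarith
  exact div_nonneg (sub_nonneg.2 hnum) (sq_nonneg _)

lemma tendsto_log_one_add_div_div_log {a : ℝ} (ha : a ≠ 0) :
    Tendsto (fun ς => log (1 + a / ς) / log ς) (nhdsWithin 0 (Set.Ioi 0)) (nhds (-1)) := by
  have hshift : Tendsto (fun ς : ℝ => ς + a) (nhdsWithin 0 (Set.Ioi 0)) (nhds a) := by
    simpa using (tendsto_nhdsWithin_of_tendsto_nhds (continuous_id.tendsto 0)).add_const a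
  have hratio : Tendsto (fun ς => log (ς + a) / log ς) (nhdsWithin 0 (Set.Ioi 0)) (nhds 0) :=
    ((continuousAt_log ha).tendsto.comp hshift).div_atBot tendsto_log_nhdsGT_zero
  have hlt : ∀ᶠ ς : ℝ in nhdsWithin 0 (Set.Ioi 0), ς < 1 :=
    mem_nhdsWithin_of_mem_nhds (Iio_mem_nhds one_pos)
  have hlim : Tendsto (fun ς => log (ς + a) / log ς - 1) (nhdsWithin 0 (Set.Ioi 0)) (nhds (-1)) := by
    simpa using hratio.sub_const 1
  refine hlim.congr' ?_
  filter_upwards [self_mem_nhdsWithin, hlt, hshift.eventually_ne ha] with ς (hς : 0 < ς) hς1 hςa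
  rw [one_add_div hς.ne', log_div hςa hς.ne', sub_div, div_self (log_neg hς hς1).ne]

lemma tendsto_log_one_add_div_div_log_one_add_inv {x : ℝ} (hx : x ≠ 0) :
    Tendsto (fun ς => log (1 + x / ς) / log (1 + 1 / ς)) (nhdsWithin 0 (Set.Ioi 0)) (nhds 1) := by
  have hlt : ∀ᶠ ς : ℝ in nhdsWithin 0 (Set.Ioi 0), ς < 1 :=
    mem_nhdsWithin_of_mem_nhds (Iio_mem_nhds one_pos)
  have hlim : Tendsto (fun ς => (log (1 + x / ς) / log ς) / (log (1 + 1 / ς) / log ς))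
      (nhdsWithin 0 (Set.Ioi 0)) (nhds 1) := by
    simpa [Pi.div_def] using (tendsto_log_one_add_div_div_log hx).div
      (tendsto_log_one_add_div_div_log one_ne_zero) (by norm_num)
  refine hlim.congr' ?_
  filter_upwards [self_mem_nhdsWithin, hlt] with ς (hς : 0 < ς) hς1
  exact div_div_div_cancel_right₀ (log_neg hς hς1).ne _ _

theorem smoothed_l0_limit_and_monotone_general (x : ℝ) (hx1 : x ≤ 1) :
    Tendsto (fun ς : ℝ => Real.log (1 + x / ς) / Real.log (1 + 1 / ς))
      (nhdsWithin 0 (Set.Ioi 0)) (nhds (if x = 0 then 0 else 1)) ∧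
    (0 < x → ∀ ς₁ ς₂ : ℝ, 0 < ς₁ → ς₁ ≤ ς₂ →
      Real.log (1 + x / ς₂) / Real.log (1 + 1 / ς₂) ≤
        Real.log (1 + x / ς₁) / Real.log (1 + 1 / ς₁)) := by
  refine ⟨?_, fun hx ς₁ ς₂ hς₁ h12 => ?_⟩
  · split_ifs with hx
    · simp [hx]
    · exact tendsto_log_one_add_div_div_log_one_add_inv hx
  · have hς₂ : 0 < ς₂ := hς₁.trans_le h12
    simpa only [mul_one_div] using monotoneOn_log_one_add_mul_div_log_one_add hx hx1
      (one_div_pos.2 hς₂) (one_div_pos.2 hς₁) (one_div_le_one_div_of_le hς₁ h12)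

/-- For `x ∈ [0,1]`, the smoothed ℓ0 approximant `ln(1 + x/ς)/ln(1 + 1/ς)` tends to the
indicator `‖x‖₀` (0 if `x = 0`, 1 otherwise) as `ς → 0⁺`, and for `x ∈ (0,1]` it is
monotone nonincreasing in `ς`. -/
theorem smoothed_l0_limit_and_monotone (x : ℝ) (hx0 : 0 ≤ x) (hx1 : x ≤ 1) :
    Tendsto (fun ς : ℝ => Real.log (1 + x / ς) / Real.log (1 + 1 / ς))
      (nhdsWithin 0 (Set.Ioi 0)) (nhds (if x = 0 then 0 else 1)) ∧
    (0 < x → ∀ ς₁ ς₂ : ℝ, 0 < ς₁ → ς₁ ≤ ς₂ →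
      Real.log (1 + x / ς₂) / Real.log (1 + 1 / ς₂) ≤
        Real.log (1 + x / ς₁) / Real.log (1 + 1 / ς₁)) :=
  smoothed_l0_limit_and_monotone_general x hx1
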